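/- arXiv:2011.01208 — 2 statements merged into one kernel-verified Lean document; each statement's English description precedes it below -/
import Mathlib

section
/- Let ℓ, m ≥ 0 and let g : Fin ℓ → Option (Fin m) be any function (encoding a morphism of pointed finite sets ⟨ℓ⟩ → ⟨m⟩). Let A = {a : Fin ℓ | g a ≠ none} and let k be the cardinality of A. Then there exists exactly one pair (f, σ), where f : Fin ℓ → Option (Fin k) and σ : Fin k → Fin m, such that: (i) g a = Option.map σ (f a) for every a : Fin ℓ; (ii) for every j : Fin k there is exactly one a : Fin ℓ with f a = some j; and (iii) f is order-preserving on its support, i.e., whenever a ≤ b in Fin ℓ and f a = some i and f b = some j, then i ≤ j in Fin k. -/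
/-!
Let `e : Fin k ↪o Fin ℓ` enumerate the support `A` of `g` increasingly. The inert part of any
such factorization sends each `j` to a unique preimage `τ j`; monotonicity on the support makes
`τ` strictly increasing with values in `A`, so `τ = e` and the inert part is the partial inverse
of `e`. The active part is then forced to be `j ↦ g (e j)`.
-/

open Function

theorem Function.Injective.existsUnique_partialInv_eq_some {α β : Type*} {e : α → β}
    (he : Injective e) (x : α) : ∃! y, partialInv e y = some x :=
  ⟨e x, (he.isPartialInv _ _).mpr rfl, fun _ hy => ((he.isPartialInv _ _).mp hy).symm⟩

theorem OrderEmbedding.le_of_partialInv_eq_some {α β : Type*} [Preorder α] [Preorder β]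
    (e : α ↪o β) {a b : β} (hab : a ≤ b) {i j : α} (hi : partialInv e a = some i)
    (hj : partialInv e b = some j) : i ≤ j := by
  rw [e.injective.isPartialInv] at hi hj
  subst hi hj
  exact e.le_iff_le.mp hab

theorem Function.Injective.existsUnique_map_partialInv {α β γ : Type*} {e : β → α}
    (he : Injective e) {g : α → Option γ} (hrange : ∀ a, g a ≠ none ↔ a ∈ Set.range e) :
    ∃! σ : β → γ, ∀ a, g a = Option.map σ (partialInv e a) := by
  have hsome (j : β) : (g (e j)).isSome := Option.isSome_iff_ne_none.mpr ((hrange _).mpr ⟨j, rfl⟩)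
  refine ⟨fun j => (g (e j)).get (hsome j), fun a => ?_, fun σ hσ => funext fun j => ?_⟩
  · by_cases ha : a ∈ Set.range e
    · obtain ⟨j, rfl⟩ := ha
      simp [partialInv_left he]
    · have hnone : partialInv e a = none :=
        Option.eq_none_iff_forall_ne_some.mpr fun j hj => ha ⟨j, (he.isPartialInv _ _).mp hj⟩
      rw [hnone, Option.map_none, ← not_ne_iff, hrange]
      exact ha
  · simp [hσ (e j), partialInv_left he]

theorem Finset.eq_partialInv_orderEmbOfFin {α : Type*} [LinearOrder α] {s : Finset α} {k : ℕ}
    (h : s.card = k) {f : α → Option (Fin k)} (hs : ∀ a j, f a = some j → a ∈ s)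
    (hunique : ∀ j, ∃! a, f a = some j)
    (hmono : ∀ a b, a ≤ b → ∀ i j, f a = some i → f b = some j → i ≤ j) :
    f = partialInv (s.orderEmbOfFin h) := by
  choose τ hτ using fun j => (hunique j).exists
  have hτ_mono : StrictMono τ := fun i j hij =>
    lt_of_not_ge fun hji => hij.not_ge (hmono _ _ hji _ _ (hτ j) (hτ i))
  have hτ_eq : τ = s.orderEmbOfFin h :=
    orderEmbOfFin_unique h (fun j => hs _ _ (hτ j)) hτ_mono
  funext a
  refine Option.ext fun j => ?_
  rw [(s.orderEmbOfFin h).injective.isPartialInv, ← hτ_eq]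
  exact ⟨fun ha => (hunique j).unique (hτ j) ha, fun ha => ha ▸ hτ j⟩

theorem unique_inert_active_factorization (ℓ m k : ℕ) (g : Fin ℓ → Option (Fin m))
    (hk : k = (Finset.univ.filter fun a : Fin ℓ => g a ≠ none).card) :
    ∃! fσ : (Fin ℓ → Option (Fin k)) × (Fin k → Fin m),
      (∀ a : Fin ℓ, g a = Option.map fσ.2 (fσ.1 a)) ∧
      (∀ j : Fin k, ∃! a : Fin ℓ, fσ.1 a = some j) ∧
      (∀ a b : Fin ℓ, a ≤ b → ∀ i j : Fin k,
        fσ.1 a = some i → fσ.1 b = some j → i ≤ j) := by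
  set s := Finset.univ.filter fun a : Fin ℓ => g a ≠ none
  set e := s.orderEmbOfFin hk.symm
  have hrange (a : Fin ℓ) : g a ≠ none ↔ a ∈ Set.range e := by
    simp [e, s]
  obtain ⟨σ, hσ, hσ_unique⟩ := e.injective.existsUnique_map_partialInv hrange
  refine ⟨(partialInv e, σ),
    ⟨hσ, e.injective.existsUnique_partialInv_eq_some, fun a b hab i j =>
      e.le_of_partialInv_eq_some hab⟩, ?_⟩
  rintro ⟨f, τ⟩ ⟨hfac, hunique, hmono⟩
  have hsupp (a : Fin ℓ) (j : Fin k) (ha : f a = some j) : a ∈ s := by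
    simp [s, hfac a, ha]
  obtain rfl : f = partialInv e := Finset.eq_partialInv_orderEmbOfFin _ hsupp hunique hmono
  exact Prod.ext rfl (hσ_unique τ hfac)
end

section
/- Fix integers 1 < k < ℓ. In the category of functors from Γᵒᵖ (pointed finite sets) to sets, let j⟨ℓ⟩ be the corepresentable functor ⟨m⟩ ↦ Hom(⟨ℓ⟩, ⟨m⟩), let ∂⟨k⟩ ⊆ j⟨k⟩ be the subfunctor whose value at ⟨m⟩ consists of the pointed maps ⟨k⟩ → ⟨m⟩ sending at least one nonbasepoint element to the basepoint, and for 0 ≤ p ≤ ℓ let W_p ⊆ j⟨ℓ⟩ be the subfunctor whose value at ⟨m⟩ consists of the pointed maps g : ⟨ℓ⟩ → ⟨m⟩ whose support has at most p elements. Let S be the set of pointed maps f : ⟨ℓ⟩ → ⟨k⟩ that are inert with full support and order-preserving on their support. Then the commutative square whose left map is the coproduct over f ∈ S of the inclusions ∂⟨k⟩ ↪ j⟨k⟩, whose right map is the inclusion W_{k−1} ↪ W_k, whose bottom map sends, on the summand indexed by f ∈ S, a pointed map σ : ⟨k⟩ → ⟨m⟩ to the composite σ ∘ f ∈ W_k(⟨m⟩),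 and whose top map is the restriction of the bottom map (which lands in W_{k−1}), is a pushout square in the category of functors from Γᵒᵖ to sets. -/
/-!
A pointed map `g : ⟨ℓ⟩ → ⟨m⟩` whose support has exactly `k` elements factors uniquely as
`g = σ ∘ f` with `f : ⟨ℓ⟩ → ⟨k⟩` inert, of full support and order-preserving on its support,
and `σ : ⟨k⟩ → ⟨m⟩` sending no nonbasepoint element to the basepoint: `f` is forced by the
support of `g`, since its section is the increasing enumeration of that support. Hence, at each
`⟨m⟩`, `W_k` is `W_{k-1}` together with a copy of `S × (j⟨k⟩ ∖ ∂⟨k⟩)`, and `σ ∘ f` falls into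
`W_{k-1}` exactly when `σ ∈ ∂⟨k⟩`. Pushouts of presheaves are computed objectwise, and a square
of sets that is a pullback, has injective right map, is jointly surjective, and whose bottom map
is injective off the image of the left map is a pushout.
-/

open CategoryTheory

namespace Stmt2

/-- The category `Γᵒᵖ`: objects are the pointed finite sets `⟨n⟩ = Option (Fin n)`
(with basepoint `none`) and morphisms are basepoint-preserving functions, encoded
as functions `Fin n → Option (Fin m)`. -/
structure GammaOp where
  /-- the number of nonbasepoint elements -/
  n : ℕ

instance : Category GammaOp where
  Hom a b := Fin a.n → Option (Fin b.n)
  id _ := fun x => some x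
  comp f g := fun x => (f x).bind g
  id_comp f := by funext x; rfl
  comp_id f := by
    funext x
    show (f x).bind some = f x
    cases f x <;> rfl
  assoc f g h := by
    funext x
    show ((f x).bind g).bind h = (f x).bind (fun y => (g y).bind h)
    cases f x <;> rfl

/-- The cardinality of the support of a morphism of pointed finite sets. -/
def suppCard {l m : ℕ} (g : Fin l → Option (Fin m)) : ℕ :=
  (Finset.univ.filter fun x => g x ≠ none).card

/-- `f` is inert with full support (every nonbasepoint element of the target has
exactly one preimage) and order-preserving on its support. -/
def IsInertOrdered {l k : ℕ} (f : Fin l → Option (Fin k)) : Prop :=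
  (∀ j : Fin k, ∃! x : Fin l, f x = some j) ∧
  ∀ x y : Fin l, x ≤ y → ∀ i j : Fin k, f x = some i → f y = some j → i ≤ j

/-- The indexing set `S` of the coproduct. -/
def SIdx (l k : ℕ) : Type := {f : Fin l → Option (Fin k) // IsInertOrdered f}

lemma suppCard_comp_le {a b c : GammaOp} (g : a ⟶ b) (φ : b ⟶ c) :
    suppCard (g ≫ φ) ≤ suppCard g := by
  apply Finset.card_le_card
  intro x hx
  simp only [Finset.mem_filter, Finset.mem_univ, true_and] at hx ⊢
  intro hgx
  apply hx
  show (g x).bind φ = none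
  rw [hgx]; rfl

/-- If `f` is inert with full support, then the support of any composite `f ≫ σ`
injects (via `f`) into the set of `j` with `σ j ≠ none`; this gives a cardinality
bound. -/
lemma suppCard_comp_le_of_inert {l k m : ℕ} (hk : 0 < k)
    (f : Fin l → Option (Fin k)) (hf : ∀ j : Fin k, ∃! x : Fin l, f x = some j)
    (σ : Fin k → Option (Fin m)) (t : Finset (Fin k))
    (ht : ∀ j : Fin k, σ j ≠ none → j ∈ t) :
    suppCard (fun x => (f x).bind σ) ≤ t.card := by
  classical
  apply Finset.card_le_card_of_injOn (fun x => (f x).getD ⟨0, hk⟩)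
  · intro x hx
    simp only [suppCard, Finset.mem_coe, Finset.mem_filter, Finset.mem_univ, true_and] at hx
    match hfx : f x with
    | none => rw [hfx] at hx; exact absurd rfl hx
    | some j =>
      rw [hfx] at hx
      simp only [hfx, Option.getD_some]
      exact ht j hx
  · intro x hx y hy hxy
    simp only [Finset.coe_filter, Set.mem_setOf_eq] at hx hy
    match hfx : f x with
    | none => rw [hfx] at hx; exact absurd rfl hx.2
    | some i =>
      match hfy : f y with
      | none => rw [hfy] at hy; exact absurd rfl hy.2
      | some j =>
        simp only [hfx, hfy, Option.getD_some] at hxy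
        subst hxy
        exact ((hf i).unique hfx hfy)

/-- The corepresentable functor `j⟨l⟩ = Γᵒᵖ(⟨l⟩, -)`. -/
def J (l : ℕ) : GammaOp ⥤ Type :=
  coyoneda.obj (Opposite.op ⟨l⟩)

/-- The subfunctor `W_p ⊆ j⟨l⟩` of morphisms whose support has at most `p` elements. -/
def W (l p : ℕ) : GammaOp ⥤ Type where
  obj m := {g : (⟨l⟩ : GammaOp) ⟶ m // suppCard g ≤ p}
  map φ := TypeCat.ofHom fun g => ⟨g.1 ≫ φ, le_trans (suppCard_comp_le g.1 φ) g.2⟩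
  map_id m := by refine ConcreteCategory.hom_ext _ _ fun g => ?_; exact Subtype.ext (Category.comp_id g.1)
  map_comp φ ψ := by refine ConcreteCategory.hom_ext _ _ fun g => ?_; exact Subtype.ext (Category.assoc g.1 φ ψ).symm

/-- The boundary `∂⟨k⟩ ⊆ j⟨k⟩`: pointed maps sending at least one nonbasepoint
element to the basepoint. -/
def Bd (k : ℕ) : GammaOp ⥤ Type where
  obj m := {σ : (⟨k⟩ : GammaOp) ⟶ m // ∃ x, σ x = none}
  map φ := TypeCat.ofHom fun σ => ⟨σ.1 ≫ φ, by
    obtain ⟨x, hx⟩ := σ.2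
    exact ⟨x, by show (σ.1 x).bind φ = none; rw [hx]; rfl⟩⟩
  map_id m := by refine ConcreteCategory.hom_ext _ _ fun σ => ?_; exact Subtype.ext (Category.comp_id σ.1)
  map_comp φ ψ := by refine ConcreteCategory.hom_ext _ _ fun σ => ?_; exact Subtype.ext (Category.assoc σ.1 φ ψ).symm

/-- The coproduct `∐_{f ∈ S} ∂⟨k⟩`. -/
def SBd (l k : ℕ) : GammaOp ⥤ Type where
  obj m := SIdx l k × (Bd k).obj m
  map φ := TypeCat.ofHom fun p => (p.1, (Bd k).map φ p.2)
  map_id m := by ext p <;> simp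
  map_comp φ ψ := by ext p <;> simp

/-- The coproduct `∐_{f ∈ S} j⟨k⟩`. -/
def SJ (l k : ℕ) : GammaOp ⥤ Type where
  obj m := SIdx l k × ((⟨k⟩ : GammaOp) ⟶ m)
  map φ := TypeCat.ofHom fun p => (p.1, p.2 ≫ φ)
  map_id m := by ext p <;> simp
  map_comp φ ψ := by ext p <;> simp

/-- The left map of the square: the coproduct of the boundary inclusions
`∂⟨k⟩ ↪ j⟨k⟩`. -/
def leftMap (l k : ℕ) : SBd l k ⟶ SJ l k where
  app _ := TypeCat.ofHom fun p => (p.1, p.2.1)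
  naturality _ _ _ := rfl

/-- The right map of the square: the inclusion `W_{k-1} ↪ W_k`. -/
def rightMap (l k : ℕ) : W l (k - 1) ⟶ W l k where
  app _ := TypeCat.ofHom fun g => ⟨g.1, le_trans g.2 (Nat.sub_le k 1)⟩
  naturality _ _ _ := rfl

/-- The bottom map of the square: on the summand indexed by `f ∈ S`, it sends
`σ : ⟨k⟩ → ⟨m⟩` to the composite `σ ∘ f : ⟨l⟩ → ⟨m⟩`, which has support of
cardinality at most `k`. -/
def bottomMap (l k : ℕ) (hk : 0 < k) : SJ l k ⟶ W l k where
  app m := TypeCat.ofHom fun p => ⟨fun x => (p.1.1 x).bind p.2,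
    le_of_le_of_eq
      (suppCard_comp_le_of_inert hk p.1.1 p.1.2.1 p.2 Finset.univ fun _ _ => Finset.mem_univ _)
      (by simp)⟩
  naturality m m' φ := by
    refine ConcreteCategory.hom_ext _ _ fun p => ?_
    apply Subtype.ext
    funext x
    show (p.1.1 x).bind (fun y => (p.2 y).bind φ) = ((p.1.1 x).bind p.2).bind φ
    cases p.1.1 x <;> rfl

/-- The top map of the square: the restriction of the bottom map, which lands in
`W_{k-1}` because `σ` kills at least one nonbasepoint element. -/
def topMap (l k : ℕ) (hk : 0 < k) : SBd l k ⟶ W l (k - 1) where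
  app m := TypeCat.ofHom fun p => ⟨fun x => (p.1.1 x).bind p.2.1, by
    classical
    obtain ⟨a₀, ha₀⟩ := p.2.2
    refine le_of_le_of_eq
      (suppCard_comp_le_of_inert hk p.1.1 p.1.2.1 p.2.1 (Finset.univ.erase a₀)
        fun j hj => Finset.mem_erase.2 ⟨fun h => hj (h ▸ ha₀), Finset.mem_univ j⟩) ?_
    rw [Finset.card_erase_of_mem (Finset.mem_univ a₀)]
    simp⟩
  naturality m m' φ := by
    refine ConcreteCategory.hom_ext _ _ fun p => ?_
    apply Subtype.ext
    funext x
    show (p.1.1 x).bind (fun y => (p.2.1 y).bind φ) = ((p.1.1 x).bind p.2.1).bind φ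
    cases p.1.1 x <;> rfl

open Finset

section PointedMaps

variable {l k m : ℕ}

def supp (g : Fin l → Option (Fin m)) : Finset (Fin l) :=
  univ.filter fun x => g x ≠ none

lemma suppCard_eq_card_supp (g : Fin l → Option (Fin m)) : suppCard g = #(supp g) := rfl

@[simp]
lemma mem_supp {g : Fin l → Option (Fin m)} {x : Fin l} : x ∈ supp g ↔ g x ≠ none := by
  simp [supp]

lemma supp_bind_of_forall_ne_none (f : Fin l → Option (Fin k)) {σ : Fin k → Option (Fin m)}
    (hσ : ∀ j, σ j ≠ none) : supp (fun x => (f x).bind σ) = supp f := by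
  ext x
  simp only [mem_supp]
  cases f x <;> simp [hσ]

def IsInert (f : Fin l → Option (Fin k)) : Prop :=
  ∀ j : Fin k, ∃! x : Fin l, f x = some j

section InertSection

variable {f : Fin l → Option (Fin k)}

noncomputable def inertSection (hf : IsInert f) (j : Fin k) : Fin l :=
  (hf j).choose

lemma apply_inertSection (hf : IsInert f) (j : Fin k) : f (inertSection hf j) = some j :=
  (hf j).choose_spec.1

lemma eq_inertSection_of_apply_eq (hf : IsInert f) {x : Fin l} {j : Fin k} (h : f x = some j) :
    x = inertSection hf j :=
  (hf j).choose_spec.2 x h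

lemma inertSection_injective (hf : IsInert f) : Function.Injective (inertSection hf) :=
  fun i j h => by
    rw [← Option.some_inj, ← apply_inertSection hf i, h, apply_inertSection hf j]

lemma supp_eq_image_inertSection (hf : IsInert f) : supp f = univ.image (inertSection hf) := by
  ext x
  simp only [mem_supp, mem_image, mem_univ, true_and, Option.ne_none_iff_exists']
  exact ⟨fun ⟨j, hj⟩ => ⟨j, (eq_inertSection_of_apply_eq hf hj).symm⟩,
    fun ⟨j, hj⟩ => ⟨j, hj ▸ apply_inertSection hf j⟩⟩

lemma coe_supp_eq_range_inertSection (hf : IsInert f) :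
    (supp f : Set (Fin l)) = Set.range (inertSection hf) := by
  rw [supp_eq_image_inertSection hf, coe_image, coe_univ, Set.image_univ]

lemma card_supp_of_inert (hf : IsInert f) : #(supp f) = k := by
  rw [supp_eq_image_inertSection hf, card_image_of_injective _ (inertSection_injective hf),
    card_univ, Fintype.card_fin]

lemma suppCard_bind_of_forall_ne_none (hf : IsInert f) {σ : Fin k → Option (Fin m)}
    (hσ : ∀ j, σ j ≠ none) : suppCard (fun x => (f x).bind σ) = k := by
  rw [suppCard_eq_card_supp, supp_bind_of_forall_ne_none f hσ, card_supp_of_inert hf]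

lemma exists_eq_none_of_suppCard_bind_lt (hf : IsInert f) {σ : Fin k → Option (Fin m)}
    (h : suppCard (fun x => (f x).bind σ) < k) : ∃ j, σ j = none := by
  by_contra! hσ
  exact h.ne (suppCard_bind_of_forall_ne_none hf hσ)

lemma bind_comp_inertSection (hf : IsInert f) {g : Fin l → Option (Fin m)}
    (hg : supp g ⊆ supp f) :
    (fun x => (f x).bind (g ∘ inertSection hf)) = g := by
  funext x
  cases hx : f x with
  | none =>
    rw [Option.bind_none]
    by_contra hgx
    exact mem_supp.1 (hg (mem_supp.2 (Ne.symm hgx))) hx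
  | some j => simp [eq_inertSection_of_apply_eq hf hx]

end InertSection

namespace IsInertOrdered

variable {f f' : Fin l → Option (Fin k)}

lemma isInert (hf : IsInertOrdered f) : IsInert f := hf.1

lemma strictMono_inertSection (hf : IsInertOrdered f) : StrictMono (inertSection hf.isInert) :=
  fun i j hij => lt_of_not_ge fun hji => lt_irrefl i <| hij.trans_le <|
    hf.2 _ _ hji j i (apply_inertSection hf.isInert j) (apply_inertSection hf.isInert i)

lemma eq_of_supp_eq (hf : IsInertOrdered f) (hf' : IsInertOrdered f') (h : supp f = supp f') :
    f = f' := by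
  have hsection : inertSection hf.isInert = inertSection hf'.isInert := by
    rw [← hf.strictMono_inertSection.range_inj hf'.strictMono_inertSection,
      ← coe_supp_eq_range_inertSection, ← coe_supp_eq_range_inertSection, h]
  funext x
  cases hx : f x with
  | none =>
    have : x ∉ supp f' := h ▸ fun hx' => mem_supp.1 hx' hx
    simpa [eq_comm] using this
  | some j =>
    rw [eq_inertSection_of_apply_eq hf.isInert hx, hsection, apply_inertSection hf'.isInert]

lemma eq_and_eq_of_bind_eq (hf : IsInertOrdered f) (hf' : IsInertOrdered f')
    {σ σ' : Fin k → Option (Fin m)} (hσ : ∀ j, σ j ≠ none) (hσ' : ∀ j, σ' j ≠ none)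
    (h : (fun x => (f x).bind σ) = fun x => (f' x).bind σ') : f = f' ∧ σ = σ' := by
  obtain rfl : f = f' := hf.eq_of_supp_eq hf' <| by
    rw [← supp_bind_of_forall_ne_none f hσ, h, supp_bind_of_forall_ne_none f' hσ']
  refine ⟨rfl, funext fun j => ?_⟩
  simpa [apply_inertSection hf.isInert j] using congrFun h (inertSection hf.isInert j)

end IsInertOrdered

/-- The inert map is the partial inverse of the increasing enumeration of `A`. -/
lemma exists_isInertOrdered_supp_eq {A : Finset (Fin l)} (hA : #A = k) :
    ∃ f : Fin l → Option (Fin k), IsInertOrdered f ∧ supp f = A := by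
  set s := A.orderEmbOfFin hA
  have hs : Function.IsPartialInv s (Function.partialInv s) := s.injective.isPartialInv
  refine ⟨Function.partialInv s, ⟨fun j => ⟨s j, hs.eq j, fun x hx => ((hs _ _).1 hx).symm⟩,
    fun x y hxy i j hi hj => ?_⟩, ?_⟩
  · rwa [← s.le_iff_le, (hs _ _).1 hi, (hs _ _).1 hj]
  · ext x
    rw [mem_supp, Option.ne_none_iff_exists', ← mem_coe, ← A.range_orderEmbOfFin hA]
    exact exists_congr fun j => hs j x

lemma exists_isInertOrdered_bind_eq {g : Fin l → Option (Fin m)} (hg : #(supp g) = k) :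
    ∃ f : Fin l → Option (Fin k), IsInertOrdered f ∧
      ∃ σ : Fin k → Option (Fin m), (∀ j, σ j ≠ none) ∧
        (fun x => (f x).bind σ) = g := by
  obtain ⟨f, hf, hsupp⟩ := exists_isInertOrdered_supp_eq hg
  refine ⟨f, hf, g ∘ inertSection hf.isInert, fun j => ?_,
    bind_comp_inertSection hf.isInert hsupp.ge⟩
  have : inertSection hf.isInert j ∈ supp f := by
    rw [mem_supp, apply_inertSection hf.isInert]
    exact Option.some_ne_none j
  exact (mem_supp (g := g)).1 (hsupp ▸ this)

end PointedMaps

section Square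

variable {l k : ℕ} (hk : 0 < k) (m : GammaOp)

lemma leftMap_app_injective : Function.Injective ((leftMap l k).app m) := fun _ _ h =>
  Prod.ext (congrArg (fun p => p.1) h) (Subtype.ext (congrArg (fun p => p.2) h))

lemma rightMap_app_injective : Function.Injective ((rightMap l k).app m) :=
  fun _ _ h => Subtype.ext (congrArg (fun g => g.1) h)

lemma topMap_comp_rightMap : topMap l k hk ≫ rightMap l k = leftMap l k ≫ bottomMap l k hk := by
  ext
  rfl

lemma isPullback_app : IsPullback ((topMap l k hk).app m) ((leftMap l k).app m)
    ((rightMap l k).app m) ((bottomMap l k hk).app m) := by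
  have w := NatTrans.congr_app (topMap_comp_rightMap (l := l) hk) m
  rw [Limits.Types.isPullback_iff]
  refine ⟨w, fun _ _ h => leftMap_app_injective m h.2, ?_⟩
  rintro g ⟨f, σ⟩ h
  have hsmall : suppCard (fun x => (f.1 x).bind σ) < k := by
    have hsupp : suppCard (fun x => (f.1 x).bind σ) = suppCard g.1 :=
      congrArg (fun g => suppCard g.1) h.symm
    have := g.2
    omega
  obtain ⟨j, hj⟩ := exists_eq_none_of_suppCard_bind_lt f.2.isInert hsmall
  exact ⟨(f, ⟨σ, j, hj⟩),
    rightMap_app_injective m ((ConcreteCategory.congr_hom w _).trans h.symm), rfl⟩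

lemma range_rightMap_app_sup_range_bottomMap_app :
    Set.range ((rightMap l k).app m) ⊔ Set.range ((bottomMap l k hk).app m) = Set.univ := by
  refine Set.eq_univ_of_forall fun g => ?_
  by_cases hg : suppCard g.1 ≤ k - 1
  · exact Or.inl ⟨⟨g.1, hg⟩, rfl⟩
  · have hcard : #(supp g.1) = k := by
      have := g.2
      rw [suppCard_eq_card_supp] at this hg
      omega
    obtain ⟨f, hf, σ, -, hfσ⟩ := exists_isInertOrdered_bind_eq hcard
    exact Or.inr ⟨(⟨f, hf⟩, σ), Subtype.ext hfσ⟩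

lemma bottomMap_app_injective_off_range_leftMap_app
    (x y : (SJ l k).obj m) (hx : x ∉ Set.range ((leftMap l k).app m))
    (hy : y ∉ Set.range ((leftMap l k).app m))
    (h : (bottomMap l k hk).app m x = (bottomMap l k hk).app m y) : x = y := by
  obtain ⟨⟨f, hf⟩, σ⟩ := x
  obtain ⟨⟨f', hf'⟩, σ'⟩ := y
  have hσ : ∀ j, σ j ≠ none := fun j hj => hx ⟨(⟨f, hf⟩, ⟨σ, j, hj⟩), rfl⟩
  have hσ' : ∀ j, σ' j ≠ none := fun j hj => hy ⟨(⟨f', hf'⟩, ⟨σ', j, hj⟩), rfl⟩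
  obtain ⟨rfl, rfl⟩ := hf.eq_and_eq_of_bind_eq hf' hσ hσ' (congrArg Subtype.val h)
  rfl

end Square

theorem isPushout_filtration_general (l k : ℕ) (hk : 1 < k) :
    IsPushout (topMap l k (Nat.zero_lt_of_lt hk)) (leftMap l k)
      (rightMap l k) (bottomMap l k (Nat.zero_lt_of_lt hk)) := by
  refine IsPushout.of_forall_isPushout_app fun m => ?_
  have : Mono ((rightMap l k).app m) := (mono_iff_injective _).2 (rightMap_app_injective m)
  exact Limits.Types.isPushout_of_isPullback_of_mono' (isPullback_app _ m)
    (range_rightMap_app_sup_range_bottomMap_app _ m)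
    (bottomMap_app_injective_off_range_leftMap_app _ m)

/-- **The pushout square** (Proposition 6.4.1 of the paper): for `1 < k < ℓ`, the
square
```
∐_{f ∈ S} ∂⟨k⟩  ⟶  W_{k-1}
      ↓                ↓
∐_{f ∈ S} j⟨k⟩  ⟶  W_k
```
is a pushout in the category of functors from `Γᵒᵖ` to sets. -/
theorem isPushout_filtration (l k : ℕ) (hk : 1 < k) (hkl : k < l) :
    IsPushout (topMap l k (Nat.zero_lt_of_lt hk)) (leftMap l k)
      (rightMap l k) (bottomMap l k (Nat.zero_lt_of_lt hk)) :=
  isPushout_filtration_general l k hk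

end Stmt2
end
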